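/- For every non-prime finite graph G with |V(G)| ≥ 4 and α_M(G) = ω_M(G) = 1, we have p(G) = 1; that is, G admits a prime extension obtained by adding a single vertex. -/

import Mathlib

/-- `M` is a module of `G`: every vertex outside `M` is adjacent to all of `M` or to none. -/
def SimpleGraph.IsModule {V : Type*} (G : SimpleGraph V) (M : Set V) : Prop :=
  ∀ v ∉ M, (∀ m ∈ M, G.Adj v m) ∨ (∀ m ∈ M, ¬ G.Adj v m)

/-- `G` is prime: at least 4 vertices and all modules are trivial. -/
def SimpleGraph.IsPrimeGraph {V : Type*} [Fintype V] (G : SimpleGraph V) : Prop :=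
  4 ≤ Fintype.card V ∧
    ∀ M : Set V, G.IsModule M → M = ∅ ∨ (∃ v, M = {v}) ∨ M = Set.univ

/-- `H` on `V ⊕ W` is an extension of `G` on `V`: it induces `G` on the `inl` copy of `V`. -/
def SimpleGraph.IsExtension {V W : Type*} (G : SimpleGraph V) (H : SimpleGraph (V ⊕ W)) : Prop :=
  ∀ u v : V, H.Adj (Sum.inl u) (Sum.inl v) ↔ G.Adj u v

/-- The prime bound of `G`: the least `p` such that `G` has a prime `p`-extension. -/
noncomputable def SimpleGraph.primeBound {V : Type*} [Fintype V] (G : SimpleGraph V) : ℕ :=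
  sInf {p : ℕ | ∃ H : SimpleGraph (V ⊕ Fin p), G.IsExtension H ∧ H.IsPrimeGraph}

/-- The modular clique number: largest size of a module of `G` that is a clique. -/
noncomputable def SimpleGraph.modularCliqueNumber {V : Type*} [Fintype V]
    (G : SimpleGraph V) : ℕ :=
  sSup {n : ℕ | ∃ M : Set V, G.IsModule M ∧ G.IsClique M ∧ M.ncard = n}

/-- The modular stability number: `ω_M` of the complement. -/
noncomputable def SimpleGraph.modularStabilityNumber {V : Type*} [Fintype V]
    (G : SimpleGraph V) : ℕ :=
  Gᶜ.modularCliqueNumber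

/-- The number of isolated vertices of `G`. -/
noncomputable def SimpleGraph.isolatedCount {V : Type*} [Fintype V] (G : SimpleGraph V) : ℕ :=
  {v : V | ∀ w, ¬ G.Adj v w}.ncard

/-- `P` is a modular partition of `G`. -/
def SimpleGraph.IsModularPartition {V : Type*} (G : SimpleGraph V) (P : Set (Set V)) : Prop :=
  (∀ X ∈ P, X.Nonempty) ∧ ⋃₀ P = Set.univ ∧ P.Pairwise Disjoint ∧ ∀ X ∈ P, G.IsModule X

/-- The quotient graph `G/P` of a (modular) partition `P`. -/
def SimpleGraph.quotientGraph {V : Type*} (G : SimpleGraph V) (P : Set (Set V)) :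
    SimpleGraph P where
  Adj X Y := (X : Set V) ≠ (Y : Set V) ∧ ∃ u ∈ (X : Set V), ∃ v ∈ (Y : Set V), G.Adj u v
  symm := by
    constructor
    rintro X Y ⟨hne, u, hu, v, hv, h⟩
    exact ⟨fun h' => hne h'.symm, v, hv, u, hu, h.symm⟩
  loopless := by
    constructor
    rintro X ⟨hne, -⟩
    exact hne rfl

/-- `M` is a strong module of `G`. -/
def SimpleGraph.IsStrongModule {V : Type*} (G : SimpleGraph V) (M : Set V) : Prop :=
  G.IsModule M ∧ ∀ N : Set V, G.IsModule N → (M ∩ N).Nonempty → M ⊆ N ∨ N ⊆ M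

/-!
`ω_M(G) = α_M(G) = 1` says exactly that `G` has no twins. A new vertex with neighbourhood `N`
makes `G` prime once `N` meets and misses every nontrivial module, and every nonempty proper
module `S` has a vertex outside it that is adjacent to the new vertex iff it is not adjacent to
`S`. Such an `N` is built inside every nontrivial module `P` by induction on `|P|`, along the
modular decomposition. If `P` is disconnected in `G` (or, complementing, in `Gᶜ`), or connected
in both but with a nontrivial proper module, then `P` is partitioned into proper modules: its
components, resp. its maximal proper modules (disjoint by Gallai's theorem). `N` is glued from
the sets of the nontrivial parts, and on singleton parts it is the non-neighbourhood of a vertex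
`s₀` of a nontrivial part. If `P` is prime, twin-freeness forces `|P| ≥ 4`, and counting
(`2 ^ |P| > 2 |P| + 2`) gives an `N` other than `∅`, `P` and every closed or open neighbourhood.
-/

theorem Finset.exists_subset_forall_ne {α : Type*} [DecidableEq α] {s : Finset α}
    (hs : 4 ≤ s.card) (f g : α → Finset α) :
    ∃ t ⊆ s, t ≠ ∅ ∧ t ≠ s ∧ ∀ v ∈ s, t ≠ f v ∧ t ≠ g v := by
  have hpow : ∀ n, 4 ≤ n → 2 * n + 2 < 2 ^ n := by
    intro n hn
    induction n, hn using Nat.le_induction with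
    | base => norm_num
    | succ n _ ih => rw [pow_succ]; omega
  set bad := insert ∅ (insert s (s.image f ∪ s.image g))
  have hbad : bad.card < s.powerset.card := by
    calc bad.card ≤ s.card + s.card + 2 := by
          refine (Finset.card_insert_le _ _).trans (Nat.succ_le_succ ?_)
          refine (Finset.card_insert_le _ _).trans (Nat.succ_le_succ ?_)
          exact (Finset.card_union_le _ _).trans
            (add_le_add Finset.card_image_le Finset.card_image_le)
      _ < 2 ^ s.card := by have := hpow _ hs; omega
      _ = s.powerset.card := (Finset.card_powerset s).symm
  obtain ⟨t, hts, htbad⟩ := Finset.exists_mem_notMem_of_card_lt_card hbad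
  simp only [bad, Finset.mem_insert, Finset.mem_union, Finset.mem_image, not_or, not_exists,
    not_and] at htbad
  exact ⟨t, Finset.mem_powerset.mp hts, htbad.1, htbad.2.1,
    fun v hv => ⟨fun h => htbad.2.2.1 v hv h.symm, fun h => htbad.2.2.2 v hv h.symm⟩⟩

open Set

namespace SimpleGraph

variable {V : Type*} {G : SimpleGraph V} {M M' N P S X : Set V}

theorem IsModule.adj_iff_adj (hM : G.IsModule M) {v a b : V} (hv : v ∉ M) (ha : a ∈ M)
    (hb : b ∈ M) : G.Adj v a ↔ G.Adj v b := by
  rcases hM v hv with h | h <;> simp [h a ha, h b hb]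

theorem IsModule.compl (hM : G.IsModule M) : Gᶜ.IsModule M := by
  intro v hv
  have hne : ∀ m ∈ M, v ≠ m := fun m hm h => hv (h ▸ hm)
  rcases hM v hv with h | h
  · exact Or.inr fun m hm hc => ((compl_adj G v m).1 hc).2 (h m hm)
  · exact Or.inl fun m hm => (compl_adj G v m).2 ⟨hne m hm, h m hm⟩

@[simp]
theorem isModule_compl : Gᶜ.IsModule M ↔ G.IsModule M :=
  ⟨fun h => compl_compl G ▸ h.compl, IsModule.compl⟩

theorem isModule_univ : G.IsModule univ := fun _ hv => absurd (mem_univ _) hv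

theorem isModule_singleton (x : V) : G.IsModule {x} := by
  intro v _
  by_cases h : G.Adj v x
  · exact Or.inl fun m hm => (mem_singleton_iff.1 hm) ▸ h
  · exact Or.inr fun m hm => (mem_singleton_iff.1 hm) ▸ h

theorem IsModule.union (hM : G.IsModule M) (hM' : G.IsModule M') (h : (M ∩ M').Nonempty) :
    G.IsModule (M ∪ M') := by
  obtain ⟨x, hxM, hxM'⟩ := h
  intro v hv
  rw [mem_union, not_or] at hv
  rcases hM v hv.1 with h1 | h1 <;> rcases hM' v hv.2 with h2 | h2
  · exact Or.inl fun m hm => hm.elim (h1 m) (h2 m)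
  · exact absurd (h1 x hxM) (h2 x hxM')
  · exact absurd (h2 x hxM') (h1 x hxM)
  · exact Or.inr fun m hm => hm.elim (h1 m) (h2 m)

theorem IsModule.isModule_pair (hM : G.IsModule M) {a b : V} (ha : a ∈ M) (hb : b ∈ M)
    (h : ∀ c ∈ M, c ≠ a → c ≠ b → (G.Adj c a ↔ G.Adj c b)) : G.IsModule {a, b} := by
  intro v hv
  simp only [mem_insert_iff, mem_singleton_iff, not_or] at hv
  have hab : G.Adj v a ↔ G.Adj v b := by
    by_cases hvM : v ∈ M
    · exact h v hvM hv.1 hv.2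
    · exact hM.adj_iff_adj hvM ha hb
  by_cases hva : G.Adj v a
  · exact Or.inl (by simpa [hva] using hab.1 hva)
  · exact Or.inr (by simpa [hva] using hva ∘ hab.2)

/-- Equivalently, `ω_M(G) = α_M(G) = 1`. -/
def TwinFree (G : SimpleGraph V) : Prop :=
  ∀ ⦃a b : V⦄, a ≠ b → ¬ G.IsModule {a, b}

theorem TwinFree.compl (hG : G.TwinFree) : Gᶜ.TwinFree :=
  fun _ _ hab hM => hG hab (isModule_compl.1 hM)

theorem TwinFree.four_le_ncard [Finite V] (hG : G.TwinFree) (hM : G.IsModule M)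
    (hMnt : M.Nontrivial) : 4 ≤ M.ncard := by
  have h2 : 1 < M.ncard := one_lt_ncard_iff_nontrivial.2 hMnt
  by_contra! h4
  obtain h | h : M.ncard = 2 ∨ M.ncard = 3 := by omega
  · obtain ⟨a, b, hab, rfl⟩ := ncard_eq_two.mp h
    exact hG hab hM
  obtain ⟨x, y, z, hxy, hxz, hyz, rfl⟩ := ncard_eq_three.mp h
  by_cases h1 : G.Adj z x ↔ G.Adj z y
  · refine hG hxy (hM.isModule_pair (by simp) (by simp) fun c hc hcx hcy => ?_)
    obtain rfl : c = z := by simpa [hcx, hcy] using hc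
    exact h1
  by_cases h2 : G.Adj y x ↔ G.Adj y z
  · refine hG hxz (hM.isModule_pair (by simp) (by simp) fun c hc hcx hcz => ?_)
    obtain rfl : c = y := by simpa [hcx, hcz] using hc
    exact h2
  refine hG hyz (hM.isModule_pair (by simp) (by simp) fun c hc hcy hcz => ?_)
  rw [show c = x by simpa [hcy, hcz] using hc, G.adj_comm x y, G.adj_comm x z]
  rw [G.adj_comm z x, G.adj_comm z y] at h1
  rw [G.adj_comm y x] at h2
  tauto

theorem two_le_modularCliqueNumber [Fintype V] {a b : V} (hab : a ≠ b)
    (hM : G.IsModule {a, b}) (hadj : G.Adj a b) : 2 ≤ G.modularCliqueNumber := by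
  have hbdd : BddAbove {n | ∃ M : Set V, G.IsModule M ∧ G.IsClique M ∧ M.ncard = n} :=
    ⟨Nat.card V, by rintro _ ⟨M, -, -, rfl⟩; exact ncard_le_card M⟩
  refine le_csSup hbdd ⟨{a, b}, hM, ?_, ncard_pair hab⟩
  exact isClique_pair.2 fun _ => hadj

theorem twinFree_of_modularCliqueNumber_eq_one [Fintype V] (hω : G.modularCliqueNumber = 1)
    (hα : G.modularStabilityNumber = 1) : G.TwinFree := by
  intro a b hab hM
  by_cases hadj : G.Adj a b
  · have := two_le_modularCliqueNumber hab hM hadj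
    omega
  · have := two_le_modularCliqueNumber hab hM.compl ((compl_adj G a b).2 ⟨hab, hadj⟩)
    rw [modularStabilityNumber] at hα
    omega

/-- A new vertex adjacent exactly to `N ⊆ P` leaves no nontrivial module inside `P`: `splits`
rules out modules avoiding the new vertex, `separates` those containing it. -/
structure IsPrimingSet (G : SimpleGraph V) (P N : Set V) : Prop where
  subset : N ⊆ P
  splits : ∀ M ⊆ P, G.IsModule M → M.Nontrivial → (M ∩ N).Nonempty ∧ (M \ N).Nonempty
  separates : ∀ S ⊆ P, G.IsModule S → S.Nonempty → S ≠ P →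
    ∃ u ∈ P \ S, ∃ s ∈ S, ¬ (u ∈ N ↔ G.Adj u s)

theorem IsPrimingSet.compl (h : G.IsPrimingSet P N) : Gᶜ.IsPrimingSet P (P \ N) where
  subset := sdiff_subset
  splits M hMP hM hMnt := by
    obtain ⟨h1, h2⟩ := h.splits M hMP (isModule_compl.1 hM) hMnt
    exact ⟨h2.mono fun u hu => ⟨hu.1, hMP hu.1, hu.2⟩,
      h1.mono fun u hu => ⟨hu.1, fun h => h.2 hu.2⟩⟩
  separates S hSP hS hSne hSP' := by
    obtain ⟨u, hu, s, hs, hus⟩ := h.separates S hSP (isModule_compl.1 hS) hSne hSP'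
    have hne : u ≠ s := fun h => hu.2 (h ▸ hs)
    refine ⟨u, hu, s, hs, ?_⟩
    simp only [mem_sdiff, hu.1, true_and, compl_adj, hne, ne_eq, not_false_eq_true]
    tauto

theorem IsPrimingSet.splits_of_subset (h : G.IsPrimingSet X (N ∩ X)) (hMX : M ⊆ X)
    (hM : G.IsModule M) (hMnt : M.Nontrivial) : (M ∩ N).Nonempty ∧ (M \ N).Nonempty := by
  obtain ⟨h1, h2⟩ := h.splits M hMX hM hMnt
  exact ⟨h1.mono fun u hu => ⟨hu.1, hu.2.1⟩,
    h2.mono fun u hu => ⟨hu.1, fun hN => hu.2 ⟨hN, hMX hu.1⟩⟩⟩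

theorem IsPrimingSet.separates_of_ssubset (h : G.IsPrimingSet X (N ∩ X)) (hXP : X ⊆ P)
    (hSX : S ⊂ X) (hS : G.IsModule S) (hSne : S.Nonempty) :
    ∃ u ∈ P \ S, ∃ s ∈ S, ¬ (u ∈ N ↔ G.Adj u s) := by
  obtain ⟨u, ⟨huX, huS⟩, s, hs, hus⟩ := h.separates S hSX.subset hS hSne hSX.ne
  exact ⟨u, ⟨hXP huX, huS⟩, s, hs, by simpa [huX] using hus⟩

theorem IsModule.exists_not_iff_adj (hX : G.IsModule X) {s : V} (hs : s ∉ X)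
    (h₁ : (X ∩ N).Nonempty) (h₂ : (X \ N).Nonempty) : ∃ u ∈ X, ¬ (u ∈ N ↔ G.Adj u s) := by
  obtain ⟨u₁, hu₁X, hu₁N⟩ := h₁
  obtain ⟨u₂, hu₂X, hu₂N⟩ := h₂
  have h := hX.adj_iff_adj hs hu₁X hu₂X
  rw [G.adj_comm s, G.adj_comm s] at h
  by_cases hadj : G.Adj u₁ s
  · exact ⟨u₂, hu₂X, by tauto⟩
  · exact ⟨u₁, hu₁X, by tauto⟩

def componentIn (G : SimpleGraph V) (P : Set V) (x : V) : Set V :=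
  {y | (G.induce P).spanningCoe.Reachable x y}

def PreconnectedOn (G : SimpleGraph V) (P : Set V) : Prop :=
  ∀ x ∈ P, P ⊆ G.componentIn P x

theorem spanningCoe_induce_adj {u v : V} :
    (G.induce P).spanningCoe.Adj u v ↔ u ∈ P ∧ v ∈ P ∧ G.Adj u v := by
  constructor
  · rintro ⟨-, a, b, hab, rfl, rfl⟩
    exact ⟨a.2, b.2, hab⟩
  · rintro ⟨hu, hv, huv⟩
    exact ⟨huv.ne, ⟨u, hu⟩, ⟨v, hv⟩, huv, rfl, rfl⟩

theorem componentIn_subset_of_closed {T : Set V} {x : V} (hx : x ∈ T)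
    (hT : ∀ a ∈ T, ∀ b, a ∈ P → b ∈ P → G.Adj a b → b ∈ T) : G.componentIn P x ⊆ T := by
  intro y hy
  replace hy := (reachable_iff_reflTransGen x y).1 hy
  induction hy with
  | refl => exact hx
  | tail _ hbc ih =>
    obtain ⟨ha, hb, hab⟩ := spanningCoe_induce_adj.1 hbc
    exact hT _ ih _ ha hb hab

theorem mem_componentIn_self (x : V) : x ∈ G.componentIn P x := Reachable.refl x

theorem componentIn_subset {x : V} (hx : x ∈ P) : G.componentIn P x ⊆ P :=
  componentIn_subset_of_closed hx fun _ _ _ _ hb _ => hb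

theorem componentIn_eq {x y : V} (hy : y ∈ G.componentIn P x) :
    G.componentIn P y = G.componentIn P x :=
  ext fun _ => ⟨Reachable.trans hy, Reachable.trans (Reachable.symm hy)⟩

theorem mem_componentIn_of_adj {a b : V} (ha : a ∈ P) (hb : b ∈ P) (hab : G.Adj a b) :
    b ∈ G.componentIn P a :=
  (spanningCoe_induce_adj.2 ⟨ha, hb, hab⟩).reachable

theorem isModule_of_forall_componentIn_subset (hP : G.IsModule P) {T : Set V} (hTP : T ⊆ P)
    (hT : ∀ x ∈ T, G.componentIn P x ⊆ T) : G.IsModule T := by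
  intro v hv
  by_cases hvP : v ∈ P
  · exact Or.inr fun m hm hvm =>
      hv (hT m hm (mem_componentIn_of_adj (hTP hm) hvP hvm.symm))
  · rcases hP v hvP with h | h
    exacts [Or.inl fun m hm => h m (hTP hm), Or.inr fun m hm => h m (hTP hm)]

theorem IsModule.subset_componentIn_or (hM : G.IsModule M) (hMP : M ⊆ P) :
    (∃ x ∈ M, M ⊆ G.componentIn P x) ∨ ∀ x ∈ M, G.componentIn P x ⊆ M := by
  by_contra! ⟨hnot, x, hxM, hxsub⟩
  obtain ⟨m, hmM, hm⟩ := not_subset.1 (hnot x hxM)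
  refine hxsub fun y hy => (componentIn_subset_of_closed (T := M ∩ G.componentIn P x)
    ⟨hxM, mem_componentIn_self x⟩ ?_ hy).1
  rintro a ⟨haM, hax⟩ b haP hbP hab
  have hbx : b ∈ G.componentIn P x := Reachable.trans hax (mem_componentIn_of_adj haP hbP hab)
  refine ⟨by_contra fun hbM => hm ?_, hbx⟩
  have hbm : G.Adj b m := (hM.adj_iff_adj hbM haM hmM).1 hab.symm
  exact Reachable.trans hbx (mem_componentIn_of_adj hbP (hMP hmM) hbm)

theorem componentIn_subset_of_forall_not_adj {C : Set V} {x : V} (hx : x ∈ C)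
    (h : ∀ c ∈ C, ∀ v ∈ P, v ∉ C → ¬ G.Adj c v) : G.componentIn P x ⊆ C :=
  componentIn_subset_of_closed hx fun a ha b _ hb hab => by_contra fun hbC => h a ha b hb hbC hab

/-- Gallai's theorem, in the form that makes maximal proper modules disjoint. -/
theorem IsModule.union_ssubset (hconn : G.PreconnectedOn P) (hcoconn : Gᶜ.PreconnectedOn P)
    (hM : G.IsModule M) (hM' : G.IsModule M') (hMP : M ⊂ P) (hM'P : M' ⊂ P)
    (hMM' : (M ∩ M').Nonempty) : M ∪ M' ⊂ P := by
  refine ssubset_of_subset_of_ne (union_subset hMP.subset hM'P.subset) fun hU => ?_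
  obtain ⟨a, haP, haM'⟩ := exists_of_ssubset hM'P
  obtain ⟨b, hbP, hbM⟩ := exists_of_ssubset hMP
  have haM : a ∈ M := ((hU ▸ haP : a ∈ M ∪ M').resolve_right haM')
  have hbM' : b ∈ M' := ((hU ▸ hbP : b ∈ M ∪ M').resolve_left hbM)
  obtain ⟨c, hc⟩ := hMM'
  -- every edge between `M ∩ M'` and the rest of `P` agrees with the edge `ab`
  have cross : ∀ w ∈ M ∩ M', ∀ v ∈ P, v ∉ M ∩ M' → (G.Adj w v ↔ G.Adj a b) := by
    intro w hw v hvP hv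
    rw [G.adj_comm]
    rcases (hU ▸ hvP : v ∈ M ∪ M') with hvM | hvM'
    · have hvM' : v ∉ M' := fun h => hv ⟨hvM, h⟩
      rw [hM'.adj_iff_adj hvM' hw.2 hbM', G.adj_comm, hM.adj_iff_adj hbM hvM haM, G.adj_comm]
    · have hvM : v ∉ M := fun h => hv ⟨h, hvM'⟩
      rw [hM.adj_iff_adj hvM hw.1 haM, G.adj_comm, hM'.adj_iff_adj haM' hvM' hbM']
  by_cases hab : G.Adj a b
  · have := componentIn_subset_of_forall_not_adj (G := Gᶜ) hc fun w hw v hvP hv hwv =>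
      ((compl_adj G w v).1 hwv).2 ((cross w hw v hvP hv).2 hab)
    exact haM' (this (hcoconn c (hMP.subset hc.1) haP)).2
  · have := componentIn_subset_of_forall_not_adj (G := G) hc fun w hw v hvP hv hwv =>
      hab ((cross w hw v hvP hv).1 hwv)
    exact haM' (this (hconn c (hMP.subset hc.1) haP)).2

/-- `part x` is the block containing `x` of a partition of `P` into proper modules. -/
structure IsModularPartitionFun (G : SimpleGraph V) (P : Set V) (part : V → Set V) : Prop where
  mem_self : ∀ x ∈ P, x ∈ part x
  ssubset : ∀ x ∈ P, part x ⊂ P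
  isModule : ∀ x ∈ P, G.IsModule (part x)
  eq_of_mem : ∀ x ∈ P, ∀ y ∈ part x, part y = part x

def gluedSet (G : SimpleGraph V) (P : Set V) (part : V → Set V) (pick : Set V → Set V)
    (s₀ : V) : Set V :=
  {u ∈ P | ((part u).Nontrivial → u ∈ pick (part u)) ∧ (¬ (part u).Nontrivial → ¬ G.Adj u s₀)}

theorem mem_gluedSet_of_not_nontrivial {part : V → Set V} {pick : Set V → Set V} {s₀ x : V}
    (hx : x ∈ P) (h : ¬ (part x).Nontrivial) :
    x ∈ G.gluedSet P part pick s₀ ↔ ¬ G.Adj x s₀ := by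
  simp only [gluedSet, mem_sep_iff, hx, h, true_and, false_imp_iff, not_false_eq_true,
    forall_const]

namespace IsModularPartitionFun

variable {part : V → Set V} {pick : Set V → Set V} {s₀ : V}
  (hpart : G.IsModularPartitionFun P part)
  (hpick : ∀ Q ⊂ P, G.IsModule Q → Q.Nontrivial → G.IsPrimingSet Q (pick Q))
include hpart

theorem disjoint_of_forall_subset (hS : ∀ x ∈ S, part x ⊆ S) {y : V} (hy : y ∈ P)
    (hyS : y ∉ S) : Disjoint (part y) S :=
  Set.disjoint_left.2 fun z hzy hzS =>
    hyS (hS z hzS (hpart.eq_of_mem y hy z hzy ▸ hpart.mem_self y hy))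

include hpick

theorem isPrimingSet_gluedSet_inter {x : V} (hx : x ∈ P) (hnt : (part x).Nontrivial) :
    G.IsPrimingSet (part x) (G.gluedSet P part pick s₀ ∩ part x) := by
  have hX := hpick _ (hpart.ssubset x hx) (hpart.isModule x hx) hnt
  convert hX using 1
  ext u
  constructor
  · rintro ⟨⟨-, h, -⟩, hu⟩
    rw [hpart.eq_of_mem x hx u hu] at h
    exact h hnt
  · intro hu
    have huX := hX.subset hu
    have hpu := hpart.eq_of_mem x hx u huX
    exact ⟨⟨(hpart.ssubset x hx).subset huX, by simp [hpu, hnt, hu]⟩, huX⟩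

theorem separates_gluedSet_of_forall_subset (hs₀ : s₀ ∈ P) (hs₀nt : (part s₀).Nontrivial)
    (hSP : S ⊆ P) (hSne : S.Nonempty) (hSP' : S ≠ P) (hunion : ∀ x ∈ S, part x ⊆ S) :
    ∃ u ∈ P \ S, ∃ s ∈ S, ¬ (u ∈ G.gluedSet P part pick s₀ ↔ G.Adj u s) := by
  have of_part : ∀ y ∈ P \ S, (part y).Nontrivial → ∀ s ∈ S,
      ∃ u ∈ P \ S, ∃ s ∈ S, ¬ (u ∈ G.gluedSet P part pick s₀ ↔ G.Adj u s) := by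
    intro y hy hnt s hs
    have hdisj := hpart.disjoint_of_forall_subset hunion hy.1 hy.2
    have hY := hpart.isModule y hy.1
    obtain ⟨h₁, h₂⟩ :=
      (hpart.isPrimingSet_gluedSet_inter hpick hy.1 hnt).splits_of_subset subset_rfl hY hnt
    obtain ⟨u, hu, hus⟩ := hY.exists_not_iff_adj (Set.disjoint_right.1 hdisj hs) h₁ h₂
    exact ⟨u, ⟨(hpart.ssubset y hy.1).subset hu, Set.disjoint_left.1 hdisj hu⟩, s, hs, hus⟩
  by_cases hs₀S : s₀ ∈ S
  · obtain ⟨y, hyP, hyS⟩ := exists_of_ssubset (ssubset_of_subset_of_ne hSP hSP')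
    by_cases hnt : (part y).Nontrivial
    · exact of_part y ⟨hyP, hyS⟩ hnt s₀ hs₀S
    · refine ⟨y, ⟨hyP, hyS⟩, s₀, hs₀S, ?_⟩
      rw [mem_gluedSet_of_not_nontrivial hyP hnt]
      tauto
  · obtain ⟨s, hs⟩ := hSne
    exact of_part s₀ ⟨hs₀, hs₀S⟩ hs₀nt s hs

theorem isPrimingSet_gluedSet (hs₀ : s₀ ∈ P) (hs₀nt : (part s₀).Nontrivial)
    (hcover : ∀ M ⊆ P, G.IsModule M → (∃ x ∈ M, M ⊆ part x) ∨ ∀ x ∈ M, part x ⊆ M)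
    (hbig : ∀ M ⊆ P, G.IsModule M → M.Nontrivial → (∀ x ∈ M, part x ⊆ M) →
      ∃ x ∈ M, (part x).Nontrivial) :
    G.IsPrimingSet P (G.gluedSet P part pick s₀) where
  subset := sep_subset _ _
  splits M hMP hM hMnt := by
    rcases hcover M hMP hM with ⟨x, hxM, hMx⟩ | hunion
    · exact (hpart.isPrimingSet_gluedSet_inter hpick (hMP hxM) (hMnt.mono hMx)).splits_of_subset
        hMx hM hMnt
    · obtain ⟨x, hxM, hnt⟩ := hbig M hMP hM hMnt hunion
      obtain ⟨h₁, h₂⟩ := (hpart.isPrimingSet_gluedSet_inter hpick (hMP hxM) hnt).splits_of_subset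
        subset_rfl (hpart.isModule x (hMP hxM)) hnt
      exact ⟨h₁.mono (inter_subset_inter_left _ (hunion x hxM)),
        h₂.mono (sdiff_subset_sdiff_left (hunion x hxM))⟩
  separates S hSP hS hSne hSP' := by
    by_cases hunion : ∀ x ∈ S, part x ⊆ S
    · exact hpart.separates_gluedSet_of_forall_subset hpick hs₀ hs₀nt hSP hSne hSP' hunion
    obtain ⟨x, hxS, hSx⟩ := (hcover S hSP hS).resolve_right hunion
    have hx := hSP hxS
    have hSx' : S ⊂ part x := by
      refine ssubset_of_subset_of_ne hSx fun h => hunion fun y hy => ?_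
      rw [hpart.eq_of_mem x hx y (h ▸ hy), h]
    obtain ⟨z, hz, hzS⟩ := exists_of_ssubset hSx'
    have hnt : (part x).Nontrivial := ⟨x, hSx hxS, z, hz, fun h => hzS (h ▸ hxS)⟩
    exact (hpart.isPrimingSet_gluedSet_inter hpick hx hnt).separates_of_ssubset
      (hpart.ssubset x hx).subset hSx' hS hSne

omit hpick in
theorem exists_isPrimingSet (hP : G.IsModule P) (hPnt : P.Nontrivial)
    (hcover : ∀ M ⊆ P, G.IsModule M → (∃ x ∈ M, M ⊆ part x) ∨ ∀ x ∈ M, part x ⊆ M)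
    (hbig : ∀ M ⊆ P, G.IsModule M → M.Nontrivial → (∀ x ∈ M, part x ⊆ M) →
      ∃ x ∈ M, (part x).Nontrivial)
    (ih : ∀ Q ⊂ P, G.IsModule Q → Q.Nontrivial → ∃ N, G.IsPrimingSet Q N) :
    ∃ N, G.IsPrimingSet P N := by
  choose! pick hpick using ih
  obtain ⟨s₀, hs₀, hnt⟩ := hbig P subset_rfl hP hPnt fun x hx => (hpart.ssubset x hx).subset
  exact ⟨_, hpart.isPrimingSet_gluedSet hpick hs₀ hnt hcover hbig⟩

end IsModularPartitionFun

theorem isModularPartitionFun_componentIn (hP : G.IsModule P) (hdisc : ¬ G.PreconnectedOn P) :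
    G.IsModularPartitionFun P (G.componentIn P) where
  mem_self x _ := mem_componentIn_self x
  ssubset x hx := by
    refine ssubset_of_subset_of_ne (componentIn_subset hx) fun h => hdisc fun y hy z hz => ?_
    have hyx : y ∈ G.componentIn P x := by rwa [h]
    rwa [componentIn_eq hyx, h]
  isModule x hx := isModule_of_forall_componentIn_subset hP (componentIn_subset hx)
    fun _ hy => (componentIn_eq hy).subset
  eq_of_mem _ _ _ hy := componentIn_eq hy

theorem exists_isPrimingSet_of_not_preconnectedOn (hG : G.TwinFree) (hP : G.IsModule P)
    (hPnt : P.Nontrivial) (hdisc : ¬ G.PreconnectedOn P)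
    (ih : ∀ Q ⊂ P, G.IsModule Q → Q.Nontrivial → ∃ N, G.IsPrimingSet Q N) :
    ∃ N, G.IsPrimingSet P N := by
  refine (isModularPartitionFun_componentIn hP hdisc).exists_isPrimingSet hP hPnt
    (fun M hMP hM => hM.subset_componentIn_or hMP) (fun M hMP _ hMnt hunion => ?_) ih
  by_contra! htriv
  have hsing : ∀ x ∈ M, G.componentIn P x = {x} := fun x hx =>
    (htriv x hx).eq_singleton_of_mem (mem_componentIn_self x)
  obtain ⟨a, ha, b, hb, hab⟩ := hMnt
  refine hG hab (isModule_of_forall_componentIn_subset hP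
    (insert_subset (hMP ha) (singleton_subset_iff.2 (hMP hb))) ?_)
  rintro x (rfl | rfl)
  · simp [hsing x ha]
  · simp [hsing x hb]

theorem exists_greatest_isModule [Finite V] (hconn : G.PreconnectedOn P)
    (hcoconn : Gᶜ.PreconnectedOn P) {x : V} (hx : x ∈ P) (hPx : P ≠ {x}) :
    ∃ X, x ∈ X ∧ X ⊂ P ∧ G.IsModule X ∧ ∀ M, x ∈ M → M ⊂ P → G.IsModule M → M ⊆ X := by
  obtain ⟨X, ⟨hxX, hXP, hX⟩, hmax⟩ :=
    (toFinite {M : Set V | x ∈ M ∧ M ⊂ P ∧ G.IsModule M}).exists_maximalFor id _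
      ⟨{x}, rfl, ssubset_of_subset_of_ne (singleton_subset_iff.2 hx) hPx.symm,
        isModule_singleton x⟩
  refine ⟨X, hxX, hXP, hX, fun M hxM hMP hM => subset_union_right.trans (hmax ?_ subset_union_left)⟩
  exact ⟨Or.inl hxX, hX.union_ssubset hconn hcoconn hM hXP hMP ⟨x, hxX, hxM⟩,
    hX.union hM ⟨x, hxX, hxM⟩⟩

theorem exists_isModularPartitionFun_of_preconnectedOn [Finite V] (hconn : G.PreconnectedOn P)
    (hcoconn : Gᶜ.PreconnectedOn P) (hPnt : P.Nontrivial) :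
    ∃ part, G.IsModularPartitionFun P part ∧
      ∀ x ∈ P, ∀ M, x ∈ M → M ⊂ P → G.IsModule M → M ⊆ part x := by
  choose! part hxpart hpartP hpart hgreatest using fun x (hx : x ∈ P) =>
    exists_greatest_isModule hconn hcoconn hx hPnt.ne_singleton
  refine ⟨part, ⟨hxpart, hpartP, hpart, fun x hx y hy => ?_⟩, hgreatest⟩
  have hyP := (hpartP x hx).subset hy
  have hxy : (part y ∩ part x).Nonempty := ⟨y, hxpart y hyP, hy⟩
  refine Subset.antisymm (subset_union_left.trans (hgreatest x hx _ (Or.inr (hxpart x hx))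
    ((hpart y hyP).union_ssubset hconn hcoconn (hpart x hx) (hpartP y hyP) (hpartP x hx) hxy)
    ((hpart y hyP).union (hpart x hx) hxy))) ?_
  exact hgreatest y hyP _ hy (hpartP x hx) (hpart x hx)

theorem exists_isPrimingSet_of_preconnectedOn [Finite V] (hP : G.IsModule P)
    (hPnt : P.Nontrivial) (hconn : G.PreconnectedOn P) (hcoconn : Gᶜ.PreconnectedOn P)
    (hM₀ : ∃ M ⊂ P, G.IsModule M ∧ M.Nontrivial)
    (ih : ∀ Q ⊂ P, G.IsModule Q → Q.Nontrivial → ∃ N, G.IsPrimingSet Q N) :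
    ∃ N, G.IsPrimingSet P N := by
  obtain ⟨part, hpart, hgreatest⟩ :=
    exists_isModularPartitionFun_of_preconnectedOn hconn hcoconn hPnt
  have of_ssubset : ∀ M ⊂ P, G.IsModule M → M.Nontrivial → ∃ x ∈ M, (part x).Nontrivial :=
    fun M hMP hM hMnt =>
      let ⟨x, hx⟩ := hMnt.nonempty
      ⟨x, hx, hMnt.mono (hgreatest x (hMP.subset hx) M hx hMP hM)⟩
  refine hpart.exists_isPrimingSet hP hPnt (fun M hMP hM => ?_) (fun M hMP hM hMnt _ => ?_) ih
  · by_cases hMP' : M = P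
    · exact Or.inr fun y hy => hMP' ▸ (hpart.ssubset y (hMP hy)).subset
    rcases M.eq_empty_or_nonempty with rfl | ⟨x, hx⟩
    · exact Or.inr fun _ => False.elim
    · exact Or.inl ⟨x, hx, hgreatest x (hMP hx) M hx (ssubset_of_subset_of_ne hMP hMP') hM⟩
  · by_cases hMP' : M = P
    · obtain ⟨M', hM'P, hM', hM'nt⟩ := hM₀
      obtain ⟨x, hx, hnt⟩ := of_ssubset M' hM'P hM' hM'nt
      exact ⟨x, hMP' ▸ hM'P.subset hx, hnt⟩
    · exact of_ssubset M (ssubset_of_subset_of_ne hMP hMP') hM hMnt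

theorem exists_isPrimingSet_of_forall_ssubset [Finite V] (hG : G.TwinFree) (hP : G.IsModule P)
    (hPnt : P.Nontrivial) (hprime : ∀ M ⊂ P, G.IsModule M → M.Subsingleton) :
    ∃ N, G.IsPrimingSet P N := by
  classical
  obtain ⟨s, rfl⟩ := P.toFinite.exists_finset_coe
  have hs : 4 ≤ s.card := by simpa using hG.four_le_ncard hP hPnt
  obtain ⟨t, hts, ht₀, hts', ht⟩ := s.exists_subset_forall_ne hs
    (fun v => s.filter (G.Adj v)) (fun v => insert v (s.filter (G.Adj v)))
  refine ⟨t, Finset.coe_subset.2 hts, fun M hMs hM hMnt => ?_, fun S hSs hS hSne hSs' => ?_⟩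
  · obtain rfl : M = s := by_contra fun h =>
      hMnt.not_subsingleton (hprime M (ssubset_of_subset_of_ne hMs h) hM)
    obtain ⟨u, hu⟩ := Finset.nonempty_iff_ne_empty.2 ht₀
    obtain ⟨w, hw, hwt⟩ := Finset.exists_of_ssubset (Finset.ssubset_iff_subset_ne.2 ⟨hts, hts'⟩)
    exact ⟨⟨u, hts hu, hu⟩, ⟨w, hw, hwt⟩⟩
  obtain ⟨v, hvS⟩ := hSne
  obtain rfl := (hprime S (ssubset_of_subset_of_ne hSs hSs') hS).eq_singleton_of_mem hvS
  have hv : v ∈ s := hSs hvS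
  by_contra! hall
  have hnbr : ∀ u ≠ v, u ∈ t ↔ u ∈ s.filter (G.Adj v) := by
    intro u huv
    by_cases hu : u ∈ s
    · simpa [hu, G.adj_comm] using hall u ⟨hu, huv⟩ v rfl
    · exact iff_of_false (fun h => hu (hts h)) (by simp [hu])
  by_cases hvt : v ∈ t
  · refine (ht v hv).2 (Finset.ext fun u => ?_)
    by_cases huv : u = v
    · simp [huv, hvt]
    · rw [Finset.mem_insert, hnbr u huv, or_iff_right huv]
  · refine (ht v hv).1 (Finset.ext fun u => ?_)
    by_cases huv : u = v
    · simp [huv, hvt]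
    · exact hnbr u huv

theorem exists_isPrimingSet [Finite V] (hG : G.TwinFree) (hP : G.IsModule P)
    (hPnt : P.Nontrivial) : ∃ N, G.IsPrimingSet P N := by
  induction hn : P.ncard using Nat.strong_induction_on generalizing G P with
  | _ n ih =>
  have ih' : ∀ {G' : SimpleGraph V}, G'.TwinFree →
      ∀ Q ⊂ P, G'.IsModule Q → Q.Nontrivial → ∃ N, G'.IsPrimingSet Q N :=
    fun hG' Q hQP hQ hQnt => ih _ (hn ▸ ncard_lt_ncard hQP) hG' hQ hQnt rfl
  by_cases hconn : G.PreconnectedOn P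
  swap
  · exact exists_isPrimingSet_of_not_preconnectedOn hG hP hPnt hconn (ih' hG)
  by_cases hcoconn : Gᶜ.PreconnectedOn P
  swap
  · obtain ⟨N, hN⟩ := exists_isPrimingSet_of_not_preconnectedOn hG.compl hP.compl hPnt
      hcoconn (ih' hG.compl)
    exact ⟨P \ N, by simpa using hN.compl⟩
  by_cases hM₀ : ∃ M ⊂ P, G.IsModule M ∧ M.Nontrivial
  · exact exists_isPrimingSet_of_preconnectedOn hP hPnt hconn hcoconn hM₀ (ih' hG)
  · exact exists_isPrimingSet_of_forall_ssubset hG hP hPnt fun M hMP hM =>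
      not_nontrivial_iff.1 fun hMnt => hM₀ ⟨M, hMP, hM, hMnt⟩

def addVertex (G : SimpleGraph V) (N : Set V) : SimpleGraph (V ⊕ Fin 1) where
  Adj
    | .inl u, .inl v => G.Adj u v
    | .inl u, .inr _ => u ∈ N
    | .inr _, .inl v => v ∈ N
    | .inr _, .inr _ => False
  symm := by
    constructor
    rintro (u | _) (v | _) h
    exacts [h.symm, h, h, h]
  loopless := by
    constructor
    rintro (u | _) h
    exacts [G.loopless.irrefl u h, h]

theorem isExtension_addVertex (N : Set V) : G.IsExtension (G.addVertex N) :=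
  fun _ _ => Iff.rfl

theorem IsExtension.isModule_preimage_inl {W : Type*} {H : SimpleGraph (V ⊕ W)}
    (hH : G.IsExtension H) {M : Set (V ⊕ W)} (hM : H.IsModule M) :
    G.IsModule (Sum.inl ⁻¹' M) := by
  intro v hv
  rcases hM (.inl v) hv with h | h
  · exact Or.inl fun m hm => (hH v m).1 (h _ hm)
  · exact Or.inr fun m hm hvm => h _ hm ((hH v m).2 hvm)

theorem IsExtension.isModule_image_inl {W : Type*} [IsEmpty W] {H : SimpleGraph (V ⊕ W)}
    (hH : G.IsExtension H) (hM : G.IsModule M) : H.IsModule (Sum.inl '' M) := by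
  rintro (v | w) hv
  · have hvM : v ∉ M := fun h => hv ⟨v, h, rfl⟩
    rcases hM v hvM with h | h
    · exact Or.inl fun _ ⟨m, hm, hmv⟩ => hmv ▸ (hH v m).2 (h m hm)
    · exact Or.inr fun _ ⟨m, hm, hmv⟩ => hmv ▸ fun hvm => h m hm ((hH v m).1 hvm)
  · exact isEmptyElim w

theorem IsPrimeGraph.of_isExtension [Fintype V] {W : Type*} [Fintype W] [IsEmpty W]
    {H : SimpleGraph (V ⊕ W)} (hH : G.IsExtension H) (hprime : H.IsPrimeGraph) :
    G.IsPrimeGraph := by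
  refine ⟨by simpa using hprime.1, fun M hM => ?_⟩
  have hM' : Sum.inl ⁻¹' (Sum.inl '' M : Set (V ⊕ W)) = M :=
    preimage_image_eq M Sum.inl_injective
  rcases hprime.2 _ (hH.isModule_image_inl hM) with h | ⟨v | w, h⟩ | h
  · rw [← hM', h]
    simp
  · rw [← hM', h]
    exact Or.inr (Or.inl ⟨v, by ext; simp⟩)
  · exact isEmptyElim w
  · rw [← hM', h]
    simp

theorem sum_fin_one_set_ext {A B : Set (V ⊕ Fin 1)} (hl : ∀ v, Sum.inl v ∈ A ↔ Sum.inl v ∈ B)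
    (hr : Sum.inr 0 ∈ A ↔ Sum.inr 0 ∈ B) : A = B := by
  ext (v | i)
  exacts [hl v, Subsingleton.elim i 0 ▸ hr]

theorem isPrimeGraph_addVertex [Fintype V] (hcard : 3 ≤ Fintype.card V)
    (hN : G.IsPrimingSet univ N) : (G.addVertex N).IsPrimeGraph := by
  refine ⟨by simp; omega, fun M hM => ?_⟩
  have hS := (isExtension_addVertex N).isModule_preimage_inl hM
  by_cases hw : (.inr 0 : V ⊕ Fin 1) ∈ M
  · rcases (Sum.inl ⁻¹' M).eq_empty_or_nonempty with hS₀ | hSne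
    · have hS₀' : ∀ v, Sum.inl v ∉ M := eq_empty_iff_forall_notMem.1 hS₀
      exact Or.inr (Or.inl ⟨.inr 0, sum_fin_one_set_ext (by simp [hS₀']) (by simp [hw])⟩)
    by_cases hSu : Sum.inl ⁻¹' M = univ
    · have hSu' : ∀ v, Sum.inl v ∈ M := eq_univ_iff_forall.1 hSu
      exact Or.inr (Or.inr (sum_fin_one_set_ext (by simp [hSu']) (by simp [hw])))
    obtain ⟨u, ⟨-, hu⟩, s, hs, hus⟩ := hN.separates _ (subset_univ _) hS hSne hSu
    exact (hus (hM.adj_iff_adj hu hw hs)).elim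
  · by_cases hSnt : (Sum.inl ⁻¹' M).Nontrivial
    · obtain ⟨⟨s₁, hs₁, hs₁N⟩, ⟨s₂, hs₂, hs₂N⟩⟩ := hN.splits _ (subset_univ _) hS hSnt
      exact (hs₂N ((hM.adj_iff_adj hw hs₁ hs₂).1 hs₁N)).elim
    rcases (not_nontrivial_iff.1 hSnt).eq_empty_or_singleton with hS₀ | ⟨v, hv⟩
    · have hS₀' : ∀ v, Sum.inl v ∉ M := eq_empty_iff_forall_notMem.1 hS₀
      exact Or.inl (sum_fin_one_set_ext (by simp [hS₀']) (by simp [hw]))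
    · refine Or.inr (Or.inl ⟨.inl v, sum_fin_one_set_ext (fun u => ?_) (by simp [hw])⟩)
      simpa using congrArg (u ∈ ·) hv

end SimpleGraph

/-- a non-prime graph on at least 4 vertices with
`α_M(G) = ω_M(G) = 1` satisfies `p(G) = 1`. -/
theorem primeBound_eq_one_of_modular_numbers_one {V : Type*} [Fintype V]
    (G : SimpleGraph V) (hnp : ¬ G.IsPrimeGraph) (hcard : 4 ≤ Fintype.card V)
    (ha : G.modularStabilityNumber = 1) (hw : G.modularCliqueNumber = 1) :
    G.primeBound = 1 := by
  have hG := SimpleGraph.twinFree_of_modularCliqueNumber_eq_one hw ha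
  have hnt : (Set.univ : Set V).Nontrivial := by
    rw [Set.nontrivial_univ_iff, ← Fintype.one_lt_card_iff_nontrivial]
    omega
  obtain ⟨N, hN⟩ := SimpleGraph.exists_isPrimingSet hG SimpleGraph.isModule_univ hnt
  have h₁ : 1 ∈ {p | ∃ H : SimpleGraph (V ⊕ Fin p), G.IsExtension H ∧ H.IsPrimeGraph} :=
    ⟨_, SimpleGraph.isExtension_addVertex N, SimpleGraph.isPrimeGraph_addVertex (by omega) hN⟩
  have h₀ : 0 ∉ {p | ∃ H : SimpleGraph (V ⊕ Fin p), G.IsExtension H ∧ H.IsPrimeGraph} :=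
    fun ⟨_, hH, hprime⟩ => hnp (hprime.of_isExtension hH)
  exact le_antisymm (Nat.sInf_le h₁) (Nat.one_le_iff_ne_zero.2 fun h =>
    (Nat.sInf_eq_zero.1 h).elim h₀ (Set.nonempty_of_mem h₁).ne_empty)
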